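/- On a nondegenerate tetrahedron T, the sequence ℝ → P₂(T) → (P₁(T))³ → RT₀(T) → P₀(T) → 0 is exact, where the maps are: inclusion of constants, gradient, curl, divergence. That is: (i) ∇u=0 for u∈P₂(T) iff u is constant; (ii) v∈(P₁(T))³ satisfies curl v = 0 iff v = ∇u for some u∈P₂(T); (iii) w∈RT₀(T)={a+cx} satisfies div w = 0 iff w = curl v for some v∈(P₁(T))³; (iv) div maps RT₀(T) onto P₀(T) (constants). -/

import Mathlib

open Matrix

/-- Partial derivative in direction `j`. -/
noncomputable def pd (j : Fin 3) (f : (Fin 3 → ℝ) → ℝ) (x : Fin 3 → ℝ) : ℝ :=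
  fderiv ℝ f x (Pi.single j 1)

/-- Gradient of a scalar field. -/
noncomputable def grad3 (f : (Fin 3 → ℝ) → ℝ) (x : Fin 3 → ℝ) : Fin 3 → ℝ :=
  fun j => pd j f x

/-- Curl of a vector field. -/
noncomputable def curl3 (u : (Fin 3 → ℝ) → Fin 3 → ℝ) (x : Fin 3 → ℝ) : Fin 3 → ℝ :=
  ![pd 1 (fun y => u y 2) x - pd 2 (fun y => u y 1) x,
    pd 2 (fun y => u y 0) x - pd 0 (fun y => u y 2) x,
    pd 0 (fun y => u y 1) x - pd 1 (fun y => u y 0) x]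

/-- Divergence of a vector field. -/
noncomputable def div3 (u : (Fin 3 → ℝ) → Fin 3 → ℝ) (x : Fin 3 → ℝ) : ℝ :=
  ∑ j, pd j (fun y => u y j) x

/-- `u` is a vector field with affine (degree ≤ 1) components. -/
def isP1Vec (u : (Fin 3 → ℝ) → Fin 3 → ℝ) : Prop :=
  ∃ (a : Fin 3 → ℝ) (B : Matrix (Fin 3) (Fin 3) ℝ), ∀ x, u x = a + B.mulVec x

/-! Everything is computed explicitly on the polynomial spaces. An affine field `a + B x` has
constant curl, the axial vector of `B - Bᵀ`, and divergence `tr B`. If `B` is symmetric,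
`a ⬝ x + ½ x ⬝ B x` is a `P₂` potential; conversely the Jacobian `B` of a gradient is a Hessian,
hence symmetric by Schwarz's theorem. A constant field is the curl of an explicit linear field,
and the divergence of a curl vanishes since the curl is constant. The interior of a
nondegenerate tetrahedron is a nonempty open convex set, so identities on `T` may be
differentiated, and a function with vanishing gradient on `T` is constant. -/

open MvPolynomial Filter Set Topology

theorem AffineIndependent.interior_convexHull_nonempty {ι V : Type*} [Fintype ι]
    [NormedAddCommGroup V] [NormedSpace ℝ V] [FiniteDimensional ℝ V] {v : ι → V}
    (hv : AffineIndependent ℝ v) (hcard : Fintype.card ι = Module.finrank ℝ V + 1) :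
    (interior (convexHull ℝ (range v))).Nonempty := by
  rw [interior_convexHull_nonempty_iff_affineSpan_eq_top,
    hv.affineSpan_eq_top_iff_card_eq_finrank_add_one, hcard]

section Calculus

variable {f g : (Fin 3 → ℝ) → ℝ} {u v : (Fin 3 → ℝ) → Fin 3 → ℝ} {x : Fin 3 → ℝ}

theorem pd_congr (h : f =ᶠ[𝓝 x] g) (j : Fin 3) : pd j f x = pd j g x := by
  rw [pd, pd, h.fderiv_eq]

theorem div3_congr (h : u =ᶠ[𝓝 x] v) : div3 u x = div3 v x :=
  Finset.sum_congr rfl fun j _ => pd_congr (h.fun_comp (· j)) j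

theorem div3_const (w : Fin 3 → ℝ) : div3 (fun _ => w) x = 0 := by
  simp [div3, pd]

theorem grad3_eq_zero_iff : grad3 f x = 0 ↔ fderiv ℝ f x = 0 := by
  refine ⟨fun h => ?_, fun h => by ext j; simp [grad3, pd, h]⟩
  apply ContinuousLinearMap.coe_injective
  refine (Pi.basisFun ℝ (Fin 3)).ext fun j => ?_
  simpa [grad3, pd] using congrFun h j

theorem pd_apply_of_hasFDerivAt {L : (Fin 3 → ℝ) →L[ℝ] Fin 3 → ℝ} (h : HasFDerivAt u L x)
    (i j : Fin 3) : pd j (fun y => u y i) x = L (Pi.single j 1) i := by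
  rw [pd, (hasFDerivAt_pi'.1 h i).fderiv]
  rfl

end Calculus

section Affine

variable (a : Fin 3 → ℝ) (B : Matrix (Fin 3) (Fin 3) ℝ) (x : Fin 3 → ℝ)

theorem hasFDerivAt_affine :
    HasFDerivAt (fun y => a + B *ᵥ y) (LinearMap.toContinuousLinearMap (mulVecLin B)) x :=
  (LinearMap.toContinuousLinearMap (mulVecLin B)).hasFDerivAt.const_add a

theorem pd_affine (i j : Fin 3) : pd j (fun y => (a + B *ᵥ y) i) x = B i j := by
  rw [pd_apply_of_hasFDerivAt (hasFDerivAt_affine a B x)]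
  simp

theorem curl3_affine :
    curl3 (fun y => a + B *ᵥ y) x = ![B 2 1 - B 1 2, B 0 2 - B 2 0, B 1 0 - B 0 1] := by
  simp only [curl3, pd_affine]

theorem curl3_affine_eq_zero_iff : curl3 (fun y => a + B *ᵥ y) x = 0 ↔ Bᵀ = B := by
  rw [curl3_affine]
  constructor
  · intro h
    have h0 := congrFun h 0
    have h1 := congrFun h 1
    have h2 := congrFun h 2
    simp only [cons_val, Pi.zero_apply, sub_eq_zero] at h0 h1 h2
    ext i j
    fin_cases i <;> fin_cases j <;> simp [h0, h1, h2]
  · intro h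
    have := fun i j => congrFun (congrFun h i) j
    simp only [transpose_apply] at this
    ext i
    fin_cases i <;> simp [this 1 2, this 2 0, this 0 1]

theorem div3_affine : div3 (fun y => a + B *ᵥ y) x = B.trace :=
  Finset.sum_congr rfl fun j _ => pd_affine a B x j j

theorem div3_const_add_smul (c : ℝ) : div3 (fun y => a + c • y) x = 3 * c := by
  have : (fun y : Fin 3 → ℝ => a + c • y) =
      fun y => a + (c • 1 : Matrix (Fin 3) (Fin 3) ℝ) *ᵥ y := by
    simp [smul_mulVec]
  rw [this, div3_affine]
  simp [mul_comm]

theorem exists_isP1Vec_curl3_eq (w : Fin 3 → ℝ) : ∃ u, isP1Vec u ∧ ∀ x, curl3 u x = w := by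
  refine ⟨fun y => 0 + !![0, 0, w 1; w 2, 0, 0; 0, w 0, 0] *ᵥ y, ⟨_, _, fun _ => rfl⟩,
    fun x => ?_⟩
  rw [curl3_affine]
  ext i
  fin_cases i <;> simp

theorem div3_curl3_affine : div3 (curl3 (fun y => a + B *ᵥ y)) x = 0 := by
  rw [funext (curl3_affine a B), div3_const]

end Affine

section Potential

variable (a : Fin 3 → ℝ) (B : Matrix (Fin 3) (Fin 3) ℝ)

noncomputable def quadraticPotential : MvPolynomial (Fin 3) ℝ :=
  ∑ i, a i • X i + ∑ i, ∑ j, (B i j / 2) • (X i * X j)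

theorem totalDegree_quadraticPotential_le : (quadraticPotential a B).totalDegree ≤ 2 := by
  rw [← mem_restrictTotalDegree]
  refine add_mem (sum_mem fun i _ => Submodule.smul_mem _ _ ?_)
    (sum_mem fun i _ => sum_mem fun j _ => Submodule.smul_mem _ _ ?_) <;>
    rw [mem_restrictTotalDegree]
  · simp [totalDegree_X]
  · exact (totalDegree_mul _ _).trans (by simp [totalDegree_X])

theorem eval_quadraticPotential (y : Fin 3 → ℝ) :
    eval y (quadraticPotential a B) = a ⬝ᵥ y + 2⁻¹ * (y ⬝ᵥ B *ᵥ y) := by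
  simp only [quadraticPotential, map_add, map_sum, smul_eval, eval_X, eval_mul, dotProduct,
    mulVec, Finset.mul_sum]
  congr 1
  exact Finset.sum_congr rfl fun i _ => Finset.sum_congr rfl fun j _ => by ring

theorem hasFDerivAt_dotProduct_mulVec_self (x : Fin 3 → ℝ) :
    HasFDerivAt (fun y => y ⬝ᵥ B *ᵥ y)
      (∑ i, (x i • (ContinuousLinearMap.proj i).comp
          (LinearMap.toContinuousLinearMap (mulVecLin B)) +
        (B *ᵥ x) i • ContinuousLinearMap.proj i)) x :=
  HasFDerivAt.fun_sum fun i _ => (hasFDerivAt_apply i x).mul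
    (hasFDerivAt_pi'.1 (LinearMap.toContinuousLinearMap (mulVecLin B)).hasFDerivAt i)

theorem grad3_eval_quadraticPotential (x : Fin 3 → ℝ) :
    grad3 (fun y => eval y (quadraticPotential a B)) x = a + (2⁻¹ : ℝ) • (B + Bᵀ) *ᵥ x := by
  simp_rw [eval_quadraticPotential]
  have : HasFDerivAt (fun y => a ⬝ᵥ y + 2⁻¹ * (y ⬝ᵥ B *ᵥ y)) _ x :=
    (HasFDerivAt.fun_sum (u := Finset.univ) fun i _ =>
      (hasFDerivAt_apply i x).const_mul (a i)).add
    ((hasFDerivAt_dotProduct_mulVec_self B x).const_mul 2⁻¹)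
  ext k
  simp only [grad3, pd, this.fderiv]
  simp [Pi.single_apply, Finset.sum_add_distrib, add_mulVec, mulVec, dotProduct,
    mul_comm, add_comm]

end Potential

theorem transpose_eq_of_grad3_eventuallyEq {f : (Fin 3 → ℝ) → ℝ} {x a : Fin 3 → ℝ}
    {B : Matrix (Fin 3) (Fin 3) ℝ} (hf : ContDiffAt ℝ 2 f x)
    (hgrad : ∀ᶠ y in 𝓝 x, grad3 f y = a + B *ᵥ y) : Bᵀ = B := by
  have hd : DifferentiableAt ℝ (fderiv ℝ f) x :=
    (hf.fderiv_right (m := 1) (by norm_num)).differentiableAt (by norm_num)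
  have hess : ∀ l m : Fin 3,
      fderiv ℝ (fderiv ℝ f) x (Pi.single m 1) (Pi.single l 1) = B l m := by
    intro l m
    have hpd : pd m (fun y => grad3 f y l) x = B l m :=
      (pd_congr (hgrad.mono fun y hy => congrFun hy l) m).trans (pd_affine a B x l m)
    simp only [← hpd, grad3, pd]
    simp [fderiv_clm_apply hd (differentiableAt_const _)]
  ext i j
  rw [transpose_apply, ← hess, ← hess, (hf.isSymmSndFDerivAt (by simp)).eq]

theorem stmt13 (vt : Fin 4 → Fin 3 → ℝ) (hvt : AffineIndependent ℝ vt)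
    (T : Set (Fin 3 → ℝ)) (hT : T = interior (convexHull ℝ (Set.range vt))) :
    -- (i) exactness at P₂: the kernel of ∇ is the constants
    (∀ p : MvPolynomial (Fin 3) ℝ, p.totalDegree ≤ 2 →
      ((∀ x ∈ T, grad3 (fun y => MvPolynomial.eval y p) x = 0) ↔
        ∃ c : ℝ, ∀ x ∈ T, MvPolynomial.eval x p = c)) ∧
    -- (ii) exactness at (P₁)³: curl-free affine fields are gradients of P₂
    (∀ u, isP1Vec u →
      ((∀ x ∈ T, curl3 u x = 0) ↔
        ∃ p : MvPolynomial (Fin 3) ℝ, p.totalDegree ≤ 2 ∧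
          ∀ x ∈ T, u x = grad3 (fun y => MvPolynomial.eval y p) x)) ∧
    -- (iii) exactness at RT₀: divergence-free RT₀ fields are curls of (P₁)³ fields
    (∀ (a : Fin 3 → ℝ) (c : ℝ),
      ((∀ x ∈ T, div3 (fun y => a + c • y) x = 0) ↔
        ∃ u, isP1Vec u ∧ ∀ x ∈ T, a + c • x = curl3 u x)) ∧
    -- (iv) divergence maps RT₀ onto the constants P₀
    (∀ k : ℝ, ∃ (a : Fin 3 → ℝ) (c : ℝ),
      ∀ x ∈ T, div3 (fun y => a + c • y) x = k) := by
  have hTo : IsOpen T := hT ▸ isOpen_interior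
  have hTconn : IsPreconnected T := (hT ▸ (convex_convexHull ℝ _).interior).isPreconnected
  obtain ⟨x₀, hx₀⟩ : T.Nonempty := hT ▸ hvt.interior_convexHull_nonempty (by simp)
  have hanalytic (p : MvPolynomial (Fin 3) ℝ) (y : Fin 3 → ℝ) :
      AnalyticAt ℝ (fun y => eval y p) y :=
    AnalyticOnNhd.eval_mvPolynomial p y trivial
  refine ⟨fun p _ => ⟨fun hgrad => ?_, fun ⟨c, hc⟩ x hx => ?_⟩,
    fun u ⟨a, B, hu⟩ => ?_, fun a c => ⟨fun hdiv => ?_, fun ⟨u, ⟨a', B, hu⟩, hcurl⟩ x hx => ?_⟩,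
    fun k => ⟨0, k / 3, fun x _ => by rw [div3_const_add_smul]; ring⟩⟩
  · exact ⟨_, fun x hx => hTo.is_const_of_fderiv_eq_zero hTconn
      (fun y _ => ((hanalytic p y).differentiableAt).differentiableWithinAt)
      (fun y hy => grad3_eq_zero_iff.1 (hgrad y hy)) hx hx₀⟩
  · rw [grad3_eq_zero_iff, (eventuallyEq_of_mem (hTo.mem_nhds hx) hc).fderiv_eq,
      fderiv_const_apply]
  · obtain rfl : u = fun y => a + B *ᵥ y := funext hu
    refine ⟨fun hcurl => ?_, fun ⟨p, _, hp⟩ x _ => ?_⟩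
    · have hB := (curl3_affine_eq_zero_iff a B x₀).1 (hcurl x₀ hx₀)
      refine ⟨quadraticPotential a B, totalDegree_quadraticPotential_le a B, fun x _ => ?_⟩
      rw [grad3_eval_quadraticPotential, hB, ← two_smul ℝ B, smul_mulVec, smul_smul]
      norm_num
    · refine (curl3_affine_eq_zero_iff a B x).2 (transpose_eq_of_grad3_eventuallyEq (a := a)
        (hanalytic p x₀).contDiffAt ?_)
      exact eventually_of_mem (hTo.mem_nhds hx₀) fun y hy => (hp y hy).symm
  · obtain rfl : c = 0 := by linarith [div3_const_add_smul a x₀ c ▸ hdiv x₀ hx₀]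
    obtain ⟨u, hu, hcurl⟩ := exists_isP1Vec_curl3_eq a
    exact ⟨u, hu, fun x _ => by rw [hcurl, zero_smul, add_zero]⟩
  · obtain rfl : u = fun y => a' + B *ᵥ y := funext hu
    rw [div3_congr (eventually_of_mem (hTo.mem_nhds hx) hcurl), div3_curl3_affine]
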